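/- arXiv:1509.08101 — 5 statements merged into one kernel-verified Lean document; each statement's English description precedes it below -/
import Mathlib

section
/- Let k, l, m be positive integers with m ≤ 2^((k-3)/l - 1), and let σ_R(z) = max{0, z} be the ReLU. Then there exists a collection of n := 2^k labeled points ((x_i, y_i))_{i=1}^n with x_i ∈ [0,1] and y_i ∈ {0,1} such that: (1) some network f ∈ 𝔑(σ_R; 2, 2k) achieves classification error R_z(f) = 0, and (2) every network g ∈ 𝔑(σ_R; m, l) has classification error R_z(g) ≥ 1/6. -/
noncomputable section

/-- A function `f : ℝ → ℝ` is `t`-sawtooth if `ℝ` is partitioned into `t` consecutive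
intervals (delimited by extended-real breakpoints `b 0 = ⊥ ≤ b 1 ≤ ⋯ ≤ b t = ⊤`)
and `f` is affine on each interval `[b i, b (i+1))`. -/
def Sawtooth (t : ℕ) (f : ℝ → ℝ) : Prop :=
  ∃ b : Fin (t + 1) → EReal,
    b 0 = ⊥ ∧ b (Fin.last t) = ⊤ ∧ Monotone b ∧
    ∀ i : Fin t, ∃ c d : ℝ, ∀ x : ℝ,
      b i.castSucc ≤ (x : EReal) → (x : EReal) < b i.succ → f x = c * x + d

/-- `g : ℝ → ℕ` is piecewise constant w.r.t. a partition of `ℝ` into `s` consecutive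
intervals. -/
def PiecewiseConst (s : ℕ) (g : ℝ → ℕ) : Prop :=
  ∃ b : Fin (s + 1) → EReal,
    b 0 = ⊥ ∧ b (Fin.last s) = ⊤ ∧ Monotone b ∧
    ∀ i : Fin s, ∃ c : ℕ, ∀ x : ℝ,
      b i.castSucc ≤ (x : EReal) → (x : EReal) < b i.succ → g x = c

/-- `IsLayers σ m l d F` : `F : ℝ → Fin d → ℝ` is the joint output of `l` layers of a
feedforward network with nonlinearity `σ`, each layer having at most `m` nodes. -/
inductive IsLayers (σ : ℝ → ℝ) (m : ℕ) : ℕ → (d : ℕ) → (ℝ → Fin d → ℝ) → Prop where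
  | base (d : ℕ) (hd : d ≤ m) (w b : Fin d → ℝ) :
      IsLayers σ m 1 d (fun x j => σ (b j + w j * x))
  | step (l d d' : ℕ) (F : ℝ → Fin d' → ℝ) (hF : IsLayers σ m l d' F) (hd : d ≤ m)
      (w : Fin d → Fin d' → ℝ) (b : Fin d → ℝ) :
      IsLayers σ m (l + 1) d (fun x j => σ (b j + ∑ i, w j i * F x i))

/-- The class `𝔑(σ; m, l)` of functions computed by feedforward networks with `l` layers
of at most `m` nodes each, the final layer consisting of a single node. -/
def NN (σ : ℝ → ℝ) (m l : ℕ) : Set (ℝ → ℝ) :=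
  {f | ∃ F : ℝ → Fin 1 → ℝ, IsLayers σ m l 1 F ∧ ∀ x, f x = F x 0}

/-- The recurrent class `ℜ(σ; m, l; k)`: a fixed network in `𝔑(σ; m, l)` iterated `k` times. -/
def RNN (σ : ℝ → ℝ) (m l k : ℕ) : Set (ℝ → ℝ) :=
  {f | ∃ g ∈ NN σ m l, f = g^[k]}

/-- The ReLU nonlinearity. -/
def relu (z : ℝ) : ℝ := max 0 z

/-- The classifier associated with `f`: `x ↦ 𝟙[f x ≥ 1/2]`. -/
def cls (f : ℝ → ℝ) (x : ℝ) : ℕ := if 1 / 2 ≤ f x then 1 else 0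

/-- Classification error of `f` on the labeled points `(x i, y i)`. -/
def clsErr (n : ℕ) (x : Fin n → ℝ) (y : Fin n → ℕ) (f : ℝ → ℝ) : ℝ :=
  (n : ℝ)⁻¹ * ∑ i, if cls f (x i) = y i then 0 else 1

/-- The `x`-coordinates of the `n`-alternating-point problem: `x i = i / n`. -/
def apX (n : ℕ) (i : Fin n) : ℝ := (i : ℕ) / n

/-- The labels of the `n`-alternating-point problem: `y i = i mod 2`. -/
def apY (n : ℕ) (i : Fin n) : ℕ := (i : ℕ) % 2

/-- The mirror map. -/
def fm (x : ℝ) : ℝ :=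
  if 0 ≤ x ∧ x ≤ 1 / 2 then 2 * x
  else if 1 / 2 < x ∧ x ≤ 1 then 2 * (1 - x)
  else 0

/-!
A ReLU network with `l` layers of at most `m` nodes is affine on each of at most `(m + 1) ^ l`
intervals: on an interval where the previous layer is affine, each node of the next layer bends
at most once. Where the network is affine its classifier is monotone, so among three consecutive
points `i / n` with labels `y, 1 - y, y` it misclassifies one unless a breakpoint lies between
them. With `n = 2 ^ k ≥ 8 (m + 1) ^ l` points, at least a sixth are misclassified.

Two layers of width two compute the mirror map on `[0, 1]`, and its `k`-th iterate sends
`i / 2 ^ k` to `i % 2`, so `2k` such layers classify all points correctly.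
-/

lemma relu_of_nonneg {x : ℝ} (h : 0 ≤ x) : relu x = x := max_eq_right h

lemma relu_of_nonpos {x : ℝ} (h : x ≤ 0) : relu x = 0 := max_eq_left h

def AffineOn (f : ℝ → ℝ) (s : Set ℝ) : Prop := ∃ a b : ℝ, ∀ x ∈ s, f x = a * x + b

/-- `f` is affine on every interval avoiding the breakpoints `S`, that is, on each of the
`#S + 1` open intervals into which `S` cuts `ℝ`. -/
def PiecewiseAffine (S : Finset ℝ) (f : ℝ → ℝ) : Prop :=
  ∀ I : Set ℝ, I.OrdConnected → Disjoint I S → AffineOn f I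

namespace AffineOn

lemma mono {f : ℝ → ℝ} {s t : Set ℝ} (hf : AffineOn f t) (hst : s ⊆ t) : AffineOn f s :=
  let ⟨a, b, h⟩ := hf; ⟨a, b, fun x hx => h x (hst hx)⟩

lemma const_add_sum {d : ℕ} {f : Fin d → ℝ → ℝ} {s : Set ℝ} (hf : ∀ i, AffineOn (f i) s)
    (β : ℝ) (w : Fin d → ℝ) : AffineOn (fun x => β + ∑ i, w i * f i x) s := by
  choose a b hab using hf
  refine ⟨∑ i, w i * a i, β + ∑ i, w i * b i, fun x hx => ?_⟩
  simp only [hab _ x hx, mul_add, Finset.sum_add_distrib, Finset.sum_mul, mul_assoc]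
  ring

lemma comp_relu_of_nonneg_or_nonpos {f : ℝ → ℝ} {s : Set ℝ} (hf : AffineOn f s)
    (hsign : (∀ x ∈ s, 0 ≤ f x) ∨ ∀ x ∈ s, f x ≤ 0) : AffineOn (relu ∘ f) s := by
  obtain ⟨a, b, hab⟩ := hf
  rcases hsign with hpos | hneg
  · exact ⟨a, b, fun x hx => by
      rw [Function.comp_apply, relu_of_nonneg (hpos x hx), hab x hx]⟩
  · exact ⟨0, 0, fun x hx => by simp [relu_of_nonpos (hneg x hx)]⟩

/-- The ReLU of an affine function `a * x + b` bends at most once, at `z = -b / a`. -/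
lemma exists_comp_relu {f : ℝ → ℝ} {s : Set ℝ} (hf : AffineOn f s) :
    ∃ z : ℝ, ∀ t ⊆ s, t.OrdConnected → z ∉ t → AffineOn (relu ∘ f) t := by
  obtain ⟨a, b, hab⟩ := hf
  refine ⟨-b / a, fun t hts ht hz =>
    (mono ⟨a, b, hab⟩ hts).comp_relu_of_nonneg_or_nonpos ?_⟩
  have hside : (∀ x ∈ t, x ≤ -b / a) ∨ ∀ x ∈ t, -b / a ≤ x := by
    by_contra! h
    obtain ⟨⟨x, hx, hzx⟩, ⟨y, hy, hyz⟩⟩ := h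
    exact hz (ht.out hy hx ⟨hyz.le, hzx.le⟩)
  rcases eq_or_ne a 0 with rfl | ha
  · rcases le_total 0 b with hb | hb
    · exact .inl fun x hx => by rw [hab x (hts hx)]; linarith
    · exact .inr fun x hx => by rw [hab x (hts hx)]; linarith
  have hfac : ∀ x ∈ t, f x = a * (x - -b / a) := fun x hx => by
    rw [hab x (hts hx)]; field_simp; ring
  rcases hside with hle | hge <;> rcases le_total 0 a with ha0 | ha0
  · exact .inr fun x hx => by nlinarith [hfac x hx, hle x hx]
  · exact .inl fun x hx => by nlinarith [hfac x hx, hle x hx]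
  · exact .inl fun x hx => by nlinarith [hfac x hx, hge x hx]
  · exact .inr fun x hx => by nlinarith [hfac x hx, hge x hx]

end AffineOn

namespace Finset

/-- The number of points of `S` below `x`: it indexes the piece of `ℝ \ S` containing `x`. -/
def gapIndex (S : Finset ℝ) (x : ℝ) : ℕ := #(S.filter (· < x))

def gap (S : Finset ℝ) (c : ℕ) : Set ℝ := {x | x ∉ S ∧ S.gapIndex x = c}

variable (S : Finset ℝ)

lemma gapIndex_mono : Monotone S.gapIndex := fun _ _ hxy =>
  card_le_card (monotone_filter_right S fun _ _ hs => hs.trans_le hxy)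

lemma gapIndex_lt {y z : ℝ} (hy : y ∈ S) (hyz : y < z) : S.gapIndex y < S.gapIndex z :=
  card_lt_card <| (ssubset_iff_of_subset (monotone_filter_right S fun _ _ hs => hs.trans hyz)).mpr
    ⟨y, by simp [hy, hyz], by simp⟩

lemma gapIndex_le_card (x : ℝ) : S.gapIndex x ≤ #S := card_filter_le S _

lemma disjoint_gap (c : ℕ) : Disjoint (S.gap c) S :=
  Set.disjoint_left.mpr fun _ hx => hx.1

lemma ordConnected_gap (c : ℕ) : (S.gap c).OrdConnected := by
  refine ⟨fun x ⟨_, hxc⟩ z ⟨hzS, hzc⟩ y hy => ?_⟩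
  have hxy := S.gapIndex_mono hy.1
  have hyz := S.gapIndex_mono hy.2
  refine ⟨fun hyS => ?_, by omega⟩
  have hlt := S.gapIndex_lt hyS (hy.2.lt_of_ne (by rintro rfl; exact hzS hyS))
  omega

lemma subset_gap {I : Set ℝ} (hI : I.OrdConnected) (hIS : Disjoint I S) :
    ∃ c ≤ #S, I ⊆ S.gap c := by
  rcases I.eq_empty_or_nonempty with rfl | ⟨x, hx⟩
  · exact ⟨0, Nat.zero_le _, Set.empty_subset _⟩
  refine ⟨S.gapIndex x, S.gapIndex_le_card x, fun y hy => ⟨Set.disjoint_left.mp hIS hy, ?_⟩⟩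
  refine congrArg card (filter_congr fun s hs => ?_)
  have hsI : s ∉ I := fun h => Set.disjoint_left.mp hIS h hs
  constructor <;> intro h <;> by_contra! h'
  · exact hsI (hI.out hx hy ⟨h', h.le⟩)
  · exact hsI (hI.out hy hx ⟨h', h.le⟩)

end Finset

open Finset

lemma PiecewiseAffine.const_add_sum {d : ℕ} {S : Finset ℝ} {F : ℝ → Fin d → ℝ}
    (hF : ∀ i, PiecewiseAffine S (F · i)) (β : ℝ) (w : Fin d → ℝ) :
    PiecewiseAffine S (fun x => β + ∑ i, w i * F x i) := fun I hI hIS =>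
  AffineOn.const_add_sum (f := fun i x => F x i) (fun i => hF i I hI hIS) β w

/-- ReLU adds at most one breakpoint per coordinate and per piece. -/
lemma exists_piecewiseAffine_relu_comp {d : ℕ} {S : Finset ℝ} {G : Fin d → ℝ → ℝ}
    (hG : ∀ j, PiecewiseAffine S (G j)) :
    ∃ S' : Finset ℝ, #S' + 1 ≤ (#S + 1) * (d + 1) ∧
      ∀ j, PiecewiseAffine S' (relu ∘ G j) := by
  choose z hz using fun c j =>
    (hG j _ (S.ordConnected_gap c) (S.disjoint_gap c)).exists_comp_relu
  refine ⟨S ∪ (range (#S + 1) ×ˢ univ).image (fun p => z p.1 p.2), ?_, fun j I hI hIS => ?_⟩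
  · calc #(S ∪ (range (#S + 1) ×ˢ univ).image (fun p => z p.1 p.2)) + 1
        ≤ #S + #(range (#S + 1) ×ˢ (univ : Finset (Fin d))) + 1 := by
          gcongr; exact (card_union_le _ _).trans (by gcongr; exact card_image_le)
      _ = (#S + 1) * (d + 1) := by
          rw [card_product, card_range, card_univ, Fintype.card_fin]; ring
  · obtain ⟨c, hc, hIc⟩ := S.subset_gap hI (hIS.mono_right (by simp))
    refine hz c j I hIc hI fun hzI => Set.disjoint_left.mp hIS hzI ?_
    simp only [coe_union, coe_image, Set.mem_union, Set.mem_image]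
    exact .inr ⟨(c, j), by simpa [Nat.lt_succ_iff] using hc, rfl⟩

lemma IsLayers.exists_piecewiseAffine {m l d : ℕ} {F : ℝ → Fin d → ℝ}
    (hF : IsLayers relu m l d F) :
    ∃ S : Finset ℝ, #S + 1 ≤ (m + 1) ^ l ∧ ∀ j, PiecewiseAffine S (F · j) := by
  induction hF with
  | base d hd w b =>
    obtain ⟨S, hS, hSF⟩ := exists_piecewiseAffine_relu_comp (S := ∅)
      (G := fun j x => b j + w j * x) fun j I _ _ => ⟨w j, b j, fun x _ => add_comm _ _⟩
    exact ⟨S, hS.trans (by simpa using hd), hSF⟩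
  | step _ _ _ _ _ hd w b ih =>
    obtain ⟨S, hS, hSF⟩ := ih
    obtain ⟨S', hS', hS'F⟩ := exists_piecewiseAffine_relu_comp
      fun j => PiecewiseAffine.const_add_sum hSF (b j) (w j)
    exact ⟨S', hS'.trans (by rw [pow_succ]; gcongr), hS'F⟩

lemma cls_eq_of_affineOn_Icc {f : ℝ → ℝ} {a b c : ℝ} (hf : AffineOn f (Set.Icc a c))
    (hab : a ≤ b) (hbc : b ≤ c) (hac : cls f a = cls f c) : cls f b = cls f a := by
  obtain ⟨α, β, h⟩ := hf
  have hb : f a ≤ f b ∧ f b ≤ f c ∨ f c ≤ f b ∧ f b ≤ f a := by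
    rw [h a ⟨le_rfl, hab.trans hbc⟩, h b ⟨hab, hbc⟩, h c ⟨hab.trans hbc, le_rfl⟩]
    rcases le_total 0 α with hα | hα
    · exact .inl ⟨by nlinarith, by nlinarith⟩
    · exact .inr ⟨by nlinarith, by nlinarith⟩
  unfold cls at *
  split_ifs at * <;> first | rfl | omega | (rcases hb with hb | hb <;> linarith)

/-- Each triple `3r, 3r+1, 3r+2` of consecutive points `i / n` carries labels `y, 1 - y, y`;
a triple whose span contains no breakpoint of `g` therefore holds a misclassified point, and
each breakpoint lies in the span of at most one triple. -/
lemma card_sub_le_card_misclassified {S : Finset ℝ} {g : ℝ → ℝ} (hg : PiecewiseAffine S g)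
    (n : ℕ) : n / 3 - #S ≤ #((range n).filter fun i : ℕ => cls g (i / n) ≠ i % 2) := by
  classical
  set span : ℕ → Set ℝ := fun r => Set.Icc (((3 * r : ℕ) : ℝ) / n) (((3 * r + 2 : ℕ) : ℝ) / n)
  have hsplit := card_filter_add_card_filter_not (s := range (n / 3))
    fun r => Disjoint (span r) S
  have hgood : #((range (n / 3)).filter fun r => Disjoint (span r) S)
      ≤ #((range n).filter fun i : ℕ => cls g (i / n) ≠ i % 2) := by
    refine card_le_card_of_surjOn (· / 3) fun r hr => ?_
    simp only [mem_coe, mem_filter, mem_range] at hr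
    by_contra! hE
    have hcorrect : ∀ i, i / 3 = r → cls g (i / n) = i % 2 := fun i hi => by
      by_contra hne
      exact hE ⟨i, mem_coe.mpr (mem_filter.mpr ⟨mem_range.mpr (by omega), hne⟩), hi⟩
    have hmid := cls_eq_of_affineOn_Icc (b := ((3 * r + 1 : ℕ) : ℝ) / n)
      (hg _ Set.ordConnected_Icc hr.2) (by gcongr; omega) (by gcongr; omega)
      (by rw [hcorrect _ (by omega), hcorrect (3 * r + 2) (by omega)]; omega)
    rw [hcorrect _ (by omega), hcorrect (3 * r) (by omega)] at hmid
    omega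
  have hbad : #((range (n / 3)).filter fun r => ¬ Disjoint (span r) S) ≤ #S := by
    refine card_le_card_of_surjOn (fun s : ℝ => ⌊n * s / 3⌋₊) fun r hr => ?_
    simp only [mem_coe, mem_filter, mem_range, Set.not_disjoint_iff] at hr
    obtain ⟨hr, s, ⟨hs₁, hs₂⟩, hsS⟩ := hr
    have hn : (0 : ℝ) < n := by exact_mod_cast (show 0 < n by omega)
    push_cast at hs₁ hs₂
    rw [div_le_iff₀ hn] at hs₁
    rw [le_div_iff₀ hn] at hs₂
    have hr₀ : (0 : ℝ) ≤ 3 * r := by positivity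
    exact ⟨s, hsS, (Nat.floor_eq_iff (by linarith)).mpr ⟨by linarith, by linarith⟩⟩
  rw [card_range] at hsplit
  omega

lemma one_sixth_le_clsErr {S : Finset ℝ} {g : ℝ → ℝ} (hg : PiecewiseAffine S g) {n : ℕ}
    (hn : 8 * (#S + 1) ≤ n) : 1 / 6 ≤ clsErr n (apX n) (apY n) g := by
  have hE := card_sub_le_card_misclassified hg n
  set e := #((range n).filter fun i : ℕ => cls g (i / n) ≠ i % 2)
  have hsum : ∑ i : Fin n, (if cls g (apX n i) = apY n i then (0 : ℝ) else 1) = e := by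
    refine (Fin.sum_univ_eq_sum_range
      (fun i : ℕ => if cls g (i / n) = i % 2 then (0 : ℝ) else 1) n).trans ?_
    rw [sum_ite, sum_const_zero, sum_const, nsmul_one, zero_add]
  have hn0 : (0 : ℝ) < n := by exact_mod_cast (show 0 < n by omega)
  have hne : (n : ℝ) ≤ 6 * e := by exact_mod_cast (show n ≤ 6 * e by omega)
  rw [clsErr, hsum, inv_mul_eq_div, le_div_iff₀ hn0]
  linarith

/-- Two ReLU layers of width two computing the mirror map `fm` on `[0, 1]`. -/
def mirror (x : ℝ) : ℝ := relu (2 * relu x - 4 * relu (x - 1 / 2))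

lemma mirror_of_le_half {x : ℝ} (h₀ : 0 ≤ x) (h₁ : x ≤ 1 / 2) : mirror x = 2 * x := by
  rw [mirror, relu_of_nonneg h₀, relu_of_nonpos (x := x - 1 / 2) (by linarith),
    relu_of_nonneg (by linarith)]
  ring

lemma mirror_of_half_le {x : ℝ} (h₀ : 1 / 2 ≤ x) (h₁ : x ≤ 1) : mirror x = 2 - 2 * x := by
  rw [mirror, relu_of_nonneg (x := x) (by linarith),
    relu_of_nonneg (x := x - 1 / 2) (by linarith), relu_of_nonneg (by linarith)]
  ring

lemma mirror_div_two_pow_succ_of_le {i k : ℕ} (h : i ≤ 2 ^ k) :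
    mirror (i / 2 ^ (k + 1)) = i / 2 ^ k := by
  have h' : (i : ℝ) ≤ 2 ^ k := by exact_mod_cast h
  rw [mirror_of_le_half (by positivity)
    (by rw [div_le_iff₀ (by positivity), pow_succ]; linarith), pow_succ]
  field_simp

lemma mirror_div_two_pow_succ_of_ge {i k : ℕ} (h₁ : 2 ^ k ≤ i) (h₂ : i ≤ 2 ^ (k + 1)) :
    mirror (i / 2 ^ (k + 1)) = ((2 ^ (k + 1) - i : ℕ) : ℝ) / 2 ^ k := by
  have h₁' : (2 : ℝ) ^ k ≤ i := by exact_mod_cast h₁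
  have h₂' : (i : ℝ) ≤ 2 ^ (k + 1) := by exact_mod_cast h₂
  rw [mirror_of_half_le (by rw [le_div_iff₀ (by positivity), pow_succ]; linarith)
    (by rw [div_le_one (by positivity)]; exact h₂'), Nat.cast_sub h₂, pow_succ]
  push_cast
  field_simp
  ring

lemma iterate_mirror_div_two_pow (k : ℕ) :
    ∀ i : ℕ, i ≤ 2 ^ k → mirror^[k] (i / 2 ^ k) = ((i % 2 : ℕ) : ℝ) := by
  induction k with
  | zero => intro i hi; interval_cases i <;> norm_num
  | succ k ih =>
    intro i hi
    have hpow : 2 ^ (k + 1) = 2 * 2 ^ k := by ring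
    rw [Function.iterate_succ_apply]
    rcases le_total i (2 ^ k) with hik | hki
    · rw [mirror_div_two_pow_succ_of_le hik, ih i hik]
    · rw [mirror_div_two_pow_succ_of_ge hki hi, ih _ (by omega)]
      congr 1
      omega

lemma isLayers_hinges_input :
    IsLayers relu 2 1 2 (fun x => ![relu x, relu (x - 1 / 2)]) := by
  convert IsLayers.base 2 le_rfl ![1, 1] ![0, -(1 / 2)] using 2 with x
  ext j; fin_cases j <;> simp [sub_eq_neg_add]

lemma IsLayers.hinges_comp {l : ℕ} {F : ℝ → Fin 1 → ℝ} (hF : IsLayers relu 2 l 1 F) :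
    IsLayers relu 2 (l + 1) 2 (fun x => ![relu (F x 0), relu (F x 0 - 1 / 2)]) := by
  convert IsLayers.step l 2 1 F hF le_rfl (fun _ _ => 1) ![0, -(1 / 2)] using 2 with x
  ext j; fin_cases j <;> simp [sub_eq_neg_add]

lemma IsLayers.mirror_comp {l : ℕ} {u : ℝ → ℝ}
    (hu : IsLayers relu 2 l 2 (fun x => ![relu (u x), relu (u x - 1 / 2)])) :
    IsLayers relu 2 (l + 1) 1 (fun x _ => mirror (u x)) := by
  convert IsLayers.step l 1 2 _ hu (by norm_num) (fun _ => ![2, -4]) (fun _ => 0)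
    using 2 with x
  simp [mirror, Fin.sum_univ_two, sub_eq_add_neg]

lemma isLayers_iterate_mirror {k : ℕ} (hk : 1 ≤ k) :
    IsLayers relu 2 (2 * k) 1 (fun x _ => mirror^[k] x) := by
  induction k, hk using Nat.le_induction with
  | base => exact isLayers_hinges_input.mirror_comp
  | succ k _ ih =>
    simp only [Function.iterate_succ_apply']
    exact ih.hinges_comp.mirror_comp

lemma eight_mul_succ_pow_le_two_pow {k l m : ℕ} (hl : 0 < l) (hm : 0 < m)
    (hml : (m : ℝ) ≤ (2 : ℝ) ^ (((k : ℝ) - 3) / l - 1)) : 8 * (m + 1) ^ l ≤ 2 ^ k := by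
  have hm' : (1 : ℝ) ≤ m := by exact_mod_cast hm
  have hbase : (m : ℝ) + 1 ≤ (2 : ℝ) ^ (((k : ℝ) - 3) / l) := by
    rw [Real.rpow_sub_one two_ne_zero] at hml
    linarith
  have hpow : ((m : ℝ) + 1) ^ l ≤ (2 : ℝ) ^ ((k : ℝ) - 3) := by
    calc ((m : ℝ) + 1) ^ l ≤ ((2 : ℝ) ^ (((k : ℝ) - 3) / l)) ^ l := by gcongr
      _ = (2 : ℝ) ^ ((k : ℝ) - 3) := by
        rw [← Real.rpow_natCast, ← Real.rpow_mul zero_le_two, div_mul_cancel₀ _ (by positivity)]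
  have h8 : (8 : ℝ) * (2 : ℝ) ^ ((k : ℝ) - 3) = 2 ^ k := by
    rw [Real.rpow_sub two_pos, Real.rpow_natCast, show (2 : ℝ) ^ (3 : ℝ) = 8 by norm_num]
    ring
  exact_mod_cast (show (8 : ℝ) * ((m : ℝ) + 1) ^ l ≤ 2 ^ k by linarith)

lemma apX_mem_Icc (n : ℕ) (i : Fin n) : apX n i ∈ Set.Icc (0 : ℝ) 1 :=
  ⟨by unfold apX; positivity, div_le_one_of_le₀ (by exact_mod_cast i.2.le) (by positivity)⟩

lemma clsErr_iterate_mirror (k : ℕ) :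
    clsErr (2 ^ k) (apX (2 ^ k)) (apY (2 ^ k)) mirror^[k] = 0 := by
  have hcls : ∀ i, cls mirror^[k] (apX (2 ^ k) i) = apY (2 ^ k) i := fun i => by
    rw [cls, apX, apY, Nat.cast_pow, Nat.cast_ofNat, iterate_mirror_div_two_pow k i i.2.le]
    rcases Nat.mod_two_eq_zero_or_one i with h | h <;> norm_num [h]
  simp [clsErr, hcls]

/-- on some set of `2^k` labeled points in `[0,1]` with binary labels,
a ReLU network with `2` nodes per layer and `2k` layers achieves zero classification
error, while every ReLU network with `l` layers of at most `m ≤ 2^((k-3)/l - 1)` nodes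
has classification error at least `1/6`. -/
theorem deep_vs_shallow (k l m : ℕ) (hk : 0 < k) (hl : 0 < l) (hm : 0 < m)
    (hml : (m : ℝ) ≤ (2 : ℝ) ^ (((k : ℝ) - 3) / (l : ℝ) - 1)) :
    ∃ (x : Fin (2 ^ k) → ℝ) (y : Fin (2 ^ k) → ℕ),
      (∀ i, x i ∈ Set.Icc (0 : ℝ) 1) ∧ (∀ i, y i = 0 ∨ y i = 1) ∧
      (∃ f ∈ NN relu 2 (2 * k), clsErr (2 ^ k) x y f = 0) ∧
      (∀ g ∈ NN relu m l, 1 / 6 ≤ clsErr (2 ^ k) x y g) := by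
  refine ⟨apX (2 ^ k), apY (2 ^ k), apX_mem_Icc _, fun i => Nat.mod_two_eq_zero_or_one i,
    ⟨_, ⟨_, isLayers_iterate_mirror hk, fun _ => rfl⟩, clsErr_iterate_mirror k⟩, ?_⟩
  rintro g ⟨F, hF, hgF⟩
  obtain ⟨S, hS, hSF⟩ := hF.exists_piecewiseAffine
  refine one_sixth_le_clsErr (S := S) (by simpa [← hgF] using hSF 0) ?_
  have := eight_mul_succ_pow_le_two_pow hl hm hml
  omega
end
end

section
/- Let k, l, m be positive integers, let σ : ℝ → ℝ be t-sawtooth, and let n := 2^k. On the n-ap dataset: (1) some f ∈ ℜ(σ_R; 2, 2; k) (a recurrent ReLU network with 2 layers of at most 2 nodes, iterated k times) achieves classification error R_z(f) = 0, and (2) every g ∈ 𝔑(σ; m, l) has classification error R_z(g) ≥ (n − 4(tm)^l)/(3n). -/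
noncomputable section

/-!
A network with a `t`-sawtooth nonlinearity is affine off a finite set `S` of breakpoints.
Through a layer of at most `m` nodes, each affine piece of the inputs is cut by the preimages of
the `t - 1` breakpoints of `σ`, so `#S + 1` grows by a factor of at most `tm` per layer. On each
piece the classifier `𝟙[g ≥ 1/2]` switches at most once, and around a breakpoint at most twice, so
along the `n` alternating points it switches at most `3 #S + 1` times, while every pair of
consecutive points without a switch carries a mistake.

Conversely, the mirror map is a two-layer ReLU network folding `[0, 1]` onto itself; it sends
`i / 2 ^ (k + 1)` to `i / 2 ^ k` or to its mirror image, which has the same parity, so its `k`-th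
iterate fits the `2 ^ k`-ap exactly.
-/

open Finset

def AffineOff (S : Finset ℝ) (f : ℝ → ℝ) : Prop :=
  ∀ I : Set ℝ, I.OrdConnected → Disjoint I (S : Set ℝ) → ∃ c d : ℝ, ∀ x ∈ I, f x = c * x + d

-- on `ℝ \ S`, `countBelow S` numbers the components `0, …, #S`
def countBelow (S : Finset ℝ) (x : ℝ) : ℕ := #(S.filter (· < x))

section countBelow

variable {S : Finset ℝ}

lemma countBelow_le_card (S : Finset ℝ) (x : ℝ) : countBelow S x ≤ S.card := card_filter_le _ _

lemma countBelow_mono : Monotone (countBelow S) := fun _ _ hxy =>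
  card_le_card fun s hs => by
    simp only [mem_filter] at hs ⊢
    exact ⟨hs.1, hs.2.trans_le hxy⟩

lemma countBelow_lt_iff {a b : ℝ} :
    countBelow S a < countBelow S b ↔ ∃ s ∈ S, a ≤ s ∧ s < b := by
  constructor
  · intro h
    by_contra! H
    refine h.not_ge (card_le_card fun s hs => ?_)
    simp only [mem_filter] at hs ⊢
    exact ⟨hs.1, not_le.mp fun has => (H s hs.1 has).not_gt hs.2⟩
  · rintro ⟨s, hs, has, hsb⟩
    refine card_lt_card ((ssubset_iff_of_subset ?_).mpr ⟨s, ?_, ?_⟩)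
    · intro x hx
      simp only [mem_filter] at hx ⊢
      exact ⟨hx.1, hx.2.trans (has.trans_lt hsb)⟩
    · simp [hs, hsb]
    · simp [has]

lemma countBelow_eq_of_ordConnected {I : Set ℝ} (hI : I.OrdConnected)
    (hIS : Disjoint I (S : Set ℝ)) {x y : ℝ} (hx : x ∈ I) (hy : y ∈ I) :
    countBelow S x = countBelow S y := by
  wlog hxy : x ≤ y generalizing x y
  · exact (this hy hx (le_of_not_ge hxy)).symm
  refine le_antisymm (countBelow_mono hxy) (not_lt.mp fun hlt => ?_)
  obtain ⟨s, hs, hxs, hsy⟩ := countBelow_lt_iff.mp hlt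
  exact Set.disjoint_left.mp hIS (hI.out hx hy ⟨hxs, hsy.le⟩) hs

lemma ordConnected_countBelow_eq (S : Finset ℝ) (r : ℕ) :
    {x | x ∉ S ∧ countBelow S x = r}.OrdConnected := by
  refine ⟨fun x hx y hy z hz => ⟨fun hzS => ?_, ?_⟩⟩
  · have hzy : z < y := hz.2.lt_of_ne (by rintro rfl; exact hy.1 hzS)
    exact (countBelow_lt_iff.mpr ⟨z, hzS, hz.1, hzy⟩).ne (hx.2.trans hy.2.symm)
  · exact le_antisymm (hy.2 ▸ countBelow_mono hz.2) (hx.2 ▸ countBelow_mono hz.1)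

end countBelow

namespace AffineOff

variable {S T : Finset ℝ} {f : ℝ → ℝ}

lemma exists_pieces (hf : AffineOff S f) :
    ∃ c d : ℕ → ℝ, ∀ x ∉ S, f x = c (countBelow S x) * x + d (countBelow S x) := by
  have h : ∀ r, ∃ c d : ℝ, ∀ x ∈ {x | x ∉ S ∧ countBelow S x = r}, f x = c * x + d :=
    fun r => hf _ (ordConnected_countBelow_eq S r) (Set.disjoint_left.mpr fun _ hx => hx.1)
  choose c d hcd using h
  exact ⟨c, d, fun x hx => hcd _ x ⟨hx, rfl⟩⟩

lemma add_sum {ι : Type*} [Fintype ι] {F : ι → ℝ → ℝ} (hF : ∀ i, AffineOff S (F i))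
    (b : ℝ) (w : ι → ℝ) : AffineOff S (fun x => b + ∑ i, w i * F i x) := by
  intro I hI hIS
  choose c d hcd using fun i => hF i I hI hIS
  refine ⟨∑ i, w i * c i, b + ∑ i, w i * d i, fun x hx => ?_⟩
  rw [sum_mul]
  simp only [hcd _ x hx, mul_add, sum_add_distrib, mul_assoc]
  ring

lemma comp {ι : Type*} [Fintype ι] {σ : ℝ → ℝ} {h : ι → ℝ → ℝ} (hσ : AffineOff T σ)
    (hh : ∀ j, AffineOff S (h j)) :
    ∃ S' : Finset ℝ, S'.card ≤ S.card + Fintype.card ι * ((S.card + 1) * T.card) ∧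
      ∀ j, AffineOff S' (fun x => σ (h j x)) := by
  choose c d hcd using fun j => (hh j).exists_pieces
  -- the preimages of `T` under the affine pieces of the `h j` (for a constant piece the junk
  -- value `(u - d) / 0 = 0` is a harmless extra breakpoint)
  let S' := S ∪ univ.biUnion fun j =>
    (range (S.card + 1)).biUnion fun r => T.image fun u => (u - d j r) / c j r
  refine ⟨S', ?_, fun j I hI hIS' => ?_⟩
  · refine (card_union_le _ _).trans (Nat.add_le_add_left ?_ _)
    refine card_biUnion_le.trans ((sum_le_sum fun j _ => card_biUnion_le.trans
      (sum_le_sum fun r _ => card_image_le)).trans ?_)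
    simp
  rcases I.eq_empty_or_nonempty with rfl | ⟨x₀, hx₀⟩
  · exact ⟨0, 0, by simp⟩
  have hIS : Disjoint I (S : Set ℝ) :=
    hIS'.mono_right (by simp [S'])
  set r := countBelow S x₀
  have hpiece : ∀ x ∈ I, h j x = c j r * x + d j r := fun x hx => by
    rw [hcd j x (Set.disjoint_left.mp hIS hx), countBelow_eq_of_ordConnected hI hIS hx hx₀]
  by_cases hc : c j r = 0
  · exact ⟨0, σ (d j r), fun x hx => by simp [hpiece x hx, hc]⟩
  have himage : ((fun x => c j r * x + d j r) '' I).OrdConnected :=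
    (hI.isPreconnected.image _ (by fun_prop : Continuous fun x => c j r * x + d j r).continuousOn
      ).ordConnected
  have hdisj : Disjoint ((fun x => c j r * x + d j r) '' I) (T : Set ℝ) := by
    refine Set.disjoint_left.mpr ?_
    rintro _ ⟨x, hx, rfl⟩ hu
    refine Set.disjoint_left.mp hIS' hx (mem_coe.mpr (mem_union_right _ ?_))
    refine mem_biUnion.mpr ⟨j, mem_univ _, mem_biUnion.mpr ⟨r, ?_, mem_image.mpr ⟨_, hu, ?_⟩⟩⟩
    · exact mem_range.mpr (Nat.lt_succ_of_le (countBelow_le_card S x₀))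
    · field_simp; ring
  obtain ⟨a, b, hab⟩ := hσ _ himage hdisj
  exact ⟨a * c j r, a * d j r + b, fun x hx => by
    show σ (h j x) = _
    rw [hpiece x hx, hab _ (Set.mem_image_of_mem _ hx)]; ring⟩

end AffineOff

lemma exists_castSucc_le_lt_succ {α : Type*} [LinearOrder α] {t : ℕ} (b : Fin (t + 1) → α)
    {x : α} (h0 : b 0 ≤ x) (hlast : x < b (Fin.last t)) :
    ∃ i : Fin t, b i.castSucc ≤ x ∧ x < b i.succ := by
  by_contra! H
  exact (Fin.induction (motive := fun j => b j ≤ x) h0 H (Fin.last t)).not_gt hlast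

lemma Sawtooth.exists_affineOff {t : ℕ} {σ : ℝ → ℝ} (hσ : Sawtooth t σ) :
    ∃ T : Finset ℝ, T.card + 1 ≤ t ∧ AffineOff T σ := by
  obtain ⟨b, hb0, hblast, -, hpiece⟩ := hσ
  have ht : t ≠ 0 := by
    rintro rfl
    exact bot_ne_top (hb0.symm.trans hblast)
  -- the finite breakpoints `b 1, …, b (t - 1)`
  let T := (((univ : Finset (Fin (t + 1))).erase 0).erase (Fin.last t)).image fun j => (b j).toReal
  refine ⟨T, ?_, fun I hI hIT => ?_⟩
  · have hlast0 : Fin.last t ≠ 0 := by simpa [Fin.ext_iff] using ht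
    refine Nat.add_le_of_le_sub (Nat.one_le_iff_ne_zero.mpr ht) (card_image_le.trans ?_)
    rw [card_erase_of_mem (by simpa using hlast0), card_erase_of_mem (mem_univ _)]
    simp
  have hgap : ∀ j, ∀ y ∈ I, ∀ z ∈ I, (y : EReal) ≤ b j → b j ≤ z → False := by
    intro j y hy z hz hyb hbz
    have hbot : b j ≠ ⊥ := ne_bot_of_le_ne_bot (EReal.coe_ne_bot y) hyb
    have htop : b j ≠ ⊤ := ne_top_of_le_ne_top (EReal.coe_ne_top z) hbz
    have hj : (b j).toReal ∈ T := mem_image_of_mem _ (by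
      simp only [mem_erase, mem_univ, and_true]
      exact ⟨fun h => htop (h ▸ hblast), fun h => hbot (h ▸ hb0)⟩)
    rw [← EReal.coe_toReal htop hbot, EReal.coe_le_coe_iff] at hyb hbz
    exact Set.disjoint_left.mp hIT (hI.out hy hz ⟨hyb, hbz⟩) hj
  rcases I.eq_empty_or_nonempty with rfl | ⟨x₀, hx₀⟩
  · exact ⟨0, 0, by simp⟩
  obtain ⟨i, hi, hi'⟩ := exists_castSucc_le_lt_succ b (x := (x₀ : EReal)) (hb0 ▸ bot_le)
    (hblast ▸ EReal.coe_lt_top x₀)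
  obtain ⟨c, d, hcd⟩ := hpiece i
  refine ⟨c, d, fun x hx => hcd x (not_lt.mp fun hlt => ?_) (not_le.mp fun hle => ?_)⟩
  · exact hgap _ x hx x₀ hx₀ hlt.le hi
  · exact hgap _ x₀ hx₀ x hx hi'.le hle

lemma IsLayers.width_le {σ : ℝ → ℝ} {m l d : ℕ} {F : ℝ → Fin d → ℝ} (hF : IsLayers σ m l d F) :
    d ≤ m := by
  cases hF <;> assumption

lemma IsLayers.exists_affineOff {σ : ℝ → ℝ} {T : Finset ℝ} (hσ : AffineOff T σ) {m l d : ℕ}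
    {F : ℝ → Fin d → ℝ} (hF : IsLayers σ m l d F) :
    ∃ S : Finset ℝ, S.card + 1 ≤ (m * T.card + 1) ^ l ∧ ∀ j, AffineOff S (fun x => F x j) := by
  induction hF with
  | base d hd w b =>
    obtain ⟨S, hS, hSF⟩ := hσ.comp (S := ∅) (h := fun j x => b j + w j * x)
      fun j _ _ _ => ⟨w j, b j, fun _ _ => by ring⟩
    refine ⟨S, ?_, hSF⟩
    simp only [card_empty, zero_add, one_mul, Fintype.card_fin] at hS
    nlinarith
  | step l d d' F _ hd w b ih =>
    obtain ⟨S, hS, hSF⟩ := ih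
    obtain ⟨S', hS', hS'F⟩ := hσ.comp fun j => AffineOff.add_sum hSF (b j) (w j)
    refine ⟨S', ?_, hS'F⟩
    rw [Fintype.card_fin] at hS'
    calc S'.card + 1 ≤ (S.card + 1) * (m * T.card + 1) := by
          nlinarith [Nat.mul_le_mul_right ((S.card + 1) * T.card) hd]
      _ ≤ (m * T.card + 1) ^ (l + 1) := by rw [pow_succ]; gcongr

lemma cls_le_one (f : ℝ → ℝ) (x : ℝ) : cls f x ≤ 1 := by
  unfold cls; split_ifs <;> omega

lemma cls_affine_monotone_or_antitone (c d : ℝ) :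
    Monotone (cls fun x => c * x + d) ∨ Antitone (cls fun x => c * x + d) := by
  rcases le_total 0 c with hc | hc
  · refine Or.inl fun x y hxy => ?_
    have := mul_le_mul_of_nonneg_left hxy hc
    unfold cls; split_ifs <;> first | omega | linarith
  · refine Or.inr fun x y hxy => ?_
    have := mul_le_mul_of_nonpos_left hxy hc
    unfold cls; split_ifs <;> first | omega | linarith

lemma not_two_flips {α : Type*} [Preorder α] {v : α → ℕ} (hv : Monotone v ∨ Antitone v)
    (hv1 : ∀ x, v x ≤ 1) {p₁ p₂ p₃ p₄ : α} (h₁₂ : p₁ ≤ p₂) (h₂₃ : p₂ ≤ p₃) (h₃₄ : p₃ ≤ p₄)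
    (hflip₁ : v p₁ ≠ v p₂) (hflip₃ : v p₃ ≠ v p₄) : False := by
  have := hv1 p₁; have := hv1 p₂; have := hv1 p₃; have := hv1 p₄
  rcases hv with hv | hv
  · have := hv h₁₂; have := hv h₂₃; have := hv h₃₄; omega
  · have := hv h₁₂; have := hv h₂₃; have := hv h₃₄; omega

lemma card_filter_mem_Icc_le_two {x : ℕ → ℝ} (hx : StrictMono x) (s : ℝ) (A : Finset ℕ) :
    #(A.filter fun i => s ∈ Set.Icc (x i) (x (i + 1))) ≤ 2 := by
  set B := A.filter fun i => s ∈ Set.Icc (x i) (x (i + 1))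
  rcases B.eq_empty_or_nonempty with hB | hB
  · simp [hB]
  have hsub : B ⊆ Icc (B.min' hB) (B.min' hB + 1) := fun i hi => by
    have hmin := (mem_filter.mp (B.min'_mem hB)).2
    have hi' := (mem_filter.mp hi).2
    exact mem_Icc.mpr ⟨B.min'_le i hi, hx.le_iff_le.mp (hi'.1.trans hmin.2)⟩
  have := card_le_card hsub
  rw [Nat.card_Icc] at this
  omega

lemma countBelow_ne_of_flips {g : ℝ → ℝ} {S : Finset ℝ} (hg : AffineOff S g) {x : ℕ → ℝ}
    (hx : StrictMono x) {i j : ℕ} (hij : i < j)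
    (hi : cls g (x i) ≠ cls g (x (i + 1))) (hiS : ∀ s ∈ S, s ∉ Set.Icc (x i) (x (i + 1)))
    (hj : cls g (x j) ≠ cls g (x (j + 1))) (hjS : ∀ s ∈ S, s ∉ Set.Icc (x j) (x (j + 1))) :
    countBelow S (x i) ≠ countBelow S (x j) := by
  intro hrank
  -- otherwise `g` is affine on `[x i, x (j + 1)]`, and its classifier would switch twice there
  have hdisj : Disjoint (Set.Icc (x i) (x (j + 1))) (S : Set ℝ) := by
    refine Set.disjoint_left.mpr fun s hs hsS => ?_
    by_cases hsi : s ≤ x (i + 1)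
    · exact hiS s hsS ⟨hs.1, hsi⟩
    by_cases hsj : x j ≤ s
    · exact hjS s hsS ⟨hsj, hs.2⟩
    exact hrank.not_lt (countBelow_lt_iff.mpr ⟨s, hsS, hs.1, not_le.mp hsj⟩)
  obtain ⟨c, d, hcd⟩ := hg _ Set.ordConnected_Icc hdisj
  have hcls : ∀ y ∈ Set.Icc (x i) (x (j + 1)), cls g y = cls (fun x => c * x + d) y :=
    fun y hy => by simp only [cls, hcd y hy]
  have h₁ : x i ≤ x (i + 1) := hx.monotone (Nat.le_succ i)
  have h₂ : x (i + 1) ≤ x j := hx.monotone hij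
  have h₃ : x j ≤ x (j + 1) := hx.monotone (Nat.le_succ j)
  refine not_two_flips (cls_affine_monotone_or_antitone c d) (cls_le_one _) h₁ h₂ h₃ ?_ ?_
  · rwa [← hcls _ ⟨le_rfl, by linarith⟩, ← hcls _ ⟨h₁, by linarith⟩]
  · rwa [← hcls _ ⟨by linarith, h₃⟩, ← hcls _ ⟨by linarith, le_rfl⟩]

lemma card_flips_le {g : ℝ → ℝ} {S : Finset ℝ} (hg : AffineOff S g) {x : ℕ → ℝ}
    (hx : StrictMono x) (N : ℕ) :
    #((range N).filter fun i => cls g (x i) ≠ cls g (x (i + 1))) ≤ 3 * S.card + 1 := by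
  set flips := (range N).filter fun i => cls g (x i) ≠ cls g (x (i + 1))
  let straddles i := ∃ s ∈ S, s ∈ Set.Icc (x i) (x (i + 1))
  have hstraddle : #(flips.filter straddles) ≤ 2 * S.card := by
    have hsub : flips.filter straddles ⊆
        S.biUnion fun s => flips.filter fun i => s ∈ Set.Icc (x i) (x (i + 1)) := fun i hi => by
      obtain ⟨hi, s, hs, hsi⟩ := mem_filter.mp hi
      exact mem_biUnion.mpr ⟨s, hs, mem_filter.mpr ⟨hi, hsi⟩⟩
    refine (card_le_card hsub).trans (card_biUnion_le.trans ?_)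
    simpa [mul_comm] using sum_le_sum fun s _ => card_filter_mem_Icc_le_two hx s flips
  have hclean : #(flips.filter fun i => ¬ straddles i) ≤ S.card + 1 := by
    have key : ∀ i ∈ flips.filter (fun i => ¬ straddles i),
        ∀ j ∈ flips.filter (fun i => ¬ straddles i), i < j →
          countBelow S (x i) ≠ countBelow S (x j) := by
      intro i hi j hj hij
      simp only [mem_filter, flips, straddles, not_exists, not_and] at hi hj
      exact countBelow_ne_of_flips hg hx hij hi.1.2 hi.2 hj.1.2 hj.2
    refine (card_le_card_of_injOn (fun i => countBelow S (x i)) (t := range (S.card + 1))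
      (fun i _ => mem_range.mpr (Nat.lt_succ_of_le (countBelow_le_card S _))) ?_).trans
      (card_range _).le
    intro i hi j hj hij
    rcases lt_trichotomy i j with hlt | rfl | hlt
    · exact absurd hij (key i hi j hj hlt)
    · rfl
    · exact absurd hij.symm (key j hj i hi hlt)
  have := card_filter_add_card_filter_not (s := flips) straddles
  omega

lemma le_card_flips_add_card_mistakes (v : ℕ → ℕ) (n : ℕ) :
    n ≤ #((range (n - 1)).filter fun i => v i ≠ v (i + 1)) +
      2 * #((range n).filter fun i => v i ≠ i % 2) + 1 := by
  set mistakes := (range n).filter fun i => v i ≠ i % 2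
  -- neighbouring labels differ, so a pair without a flip contains a mistake
  have hsub : (range (n - 1)).filter (fun i => ¬ v i ≠ v (i + 1)) ⊆
      mistakes ∪ mistakes.image (· - 1) := fun i hi => by
    simp only [mem_filter, mem_range, not_not] at hi
    by_cases hvi : v i = i % 2
    · refine mem_union_right _ (mem_image.mpr ⟨i + 1, mem_filter.mpr ⟨?_, ?_⟩, rfl⟩)
      · exact mem_range.mpr (by omega)
      · omega
    · exact mem_union_left _ (mem_filter.mpr ⟨mem_range.mpr (by omega), hvi⟩)
  have h₁ := card_filter_add_card_filter_not (s := range (n - 1)) fun i => v i ≠ v (i + 1)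
  have h₂ := (card_le_card hsub).trans
    ((card_union_le _ _).trans (Nat.add_le_add_left card_image_le _))
  rw [card_range] at h₁
  omega

lemma le_two_mul_card_mistakes {g : ℝ → ℝ} {S : Finset ℝ} (hg : AffineOff S g) (n : ℕ) :
    n ≤ 2 * #((range n).filter fun i : ℕ => cls g ((i : ℝ) / n) ≠ i % 2) + 3 * S.card + 2 := by
  rcases Nat.eq_zero_or_pos n with rfl | hn
  · omega
  have hx : StrictMono fun i : ℕ => (i : ℝ) / n := fun i j hij => by
    dsimp only
    gcongr
  have := le_card_flips_add_card_mistakes (fun i : ℕ => cls g ((i : ℝ) / n)) n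
  have := card_flips_le hg hx (n - 1)
  omega

lemma clsErr_apX_apY (n : ℕ) (f : ℝ → ℝ) :
    clsErr n (apX n) (apY n) f =
      #((range n).filter fun i : ℕ => cls f ((i : ℝ) / n) ≠ i % 2) / n := by
  unfold clsErr apX apY
  rw [Fin.sum_univ_eq_sum_range (fun i : ℕ => if cls f ((i : ℝ) / n) = i % 2 then (0 : ℝ) else 1),
    inv_mul_eq_div, sum_ite, sum_const_zero, zero_add, sum_const, nsmul_one]

lemma fm_eq_relu (x : ℝ) : fm x = relu (2 * relu x - 4 * relu (x - 1 / 2)) := by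
  unfold fm relu
  grind

lemma fm_mem_NN : fm ∈ NN relu 2 2 :=
  ⟨_, .step 1 1 2 _ (.base 2 le_rfl ![1, 1] ![0, -1 / 2]) (by norm_num) ![![2, -4]] ![0],
    fun x => by
      simp only [fm_eq_relu, Matrix.cons_val_fin_one, Matrix.cons_val', Fin.sum_univ_two,
        Matrix.cons_val_zero, Matrix.cons_val_one]
      ring_nf⟩

lemma fm_iterate_natCast_div (k i : ℕ) (hi : i ≤ 2 ^ k) :
    fm^[k] (i / 2 ^ k) = (i % 2 : ℕ) := by
  induction k generalizing i with
  | zero => interval_cases i <;> simp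
  | succ k ih =>
    have hpow : (2 : ℝ) ^ (k + 1) = 2 * 2 ^ k := pow_succ' 2 k
    have hpos : (0 : ℝ) < 2 ^ (k + 1) := by positivity
    rw [Function.iterate_succ_apply]
    rcases le_or_gt i (2 ^ k) with hik | hik
    · have hfm : fm (i / 2 ^ (k + 1)) = i / 2 ^ k := by
        have : (i : ℝ) ≤ 2 ^ k := by exact_mod_cast hik
        rw [fm, if_pos ⟨by positivity, by rw [div_le_iff₀ hpos]; linarith⟩, hpow]
        field_simp
      rw [hfm, ih i hik]
    · -- the mirror image `2 ^ (k + 1) - i` of `i` has the same parity as `i`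
      have hfm : fm (i / 2 ^ (k + 1)) = (2 ^ (k + 1) - i : ℕ) / 2 ^ k := by
        have h₁ : (2 : ℝ) ^ k < i := by exact_mod_cast hik
        have h₂ : (i : ℝ) ≤ 2 ^ (k + 1) := by exact_mod_cast hi
        rw [fm, if_neg fun h => by linarith [(div_le_iff₀ hpos).mp h.2],
          if_pos ⟨by rw [lt_div_iff₀ hpos]; linarith, (div_le_one hpos).mpr h₂⟩, Nat.cast_sub hi]
        push_cast
        rw [hpow]
        field_simp
      have hpow' : 2 ^ (k + 1) = 2 * 2 ^ k := pow_succ' 2 k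
      rw [hfm, ih _ (by omega), show (2 ^ (k + 1) - i) % 2 = i % 2 by omega]

lemma cls_fm_iterate (k i : ℕ) (hi : i < 2 ^ k) :
    cls fm^[k] ((i : ℝ) / (2 ^ k : ℕ)) = i % 2 := by
  rw [cls, Nat.cast_pow, Nat.cast_ofNat, fm_iterate_natCast_div k i hi.le]
  rcases Nat.mod_two_eq_zero_or_one i with h | h <;> norm_num [h]

theorem deep_vs_shallow_refined_general (k l m t : ℕ) (σ : ℝ → ℝ) (hσ : Sawtooth t σ) :
    (∃ f ∈ RNN relu 2 2 k, clsErr (2 ^ k) (apX (2 ^ k)) (apY (2 ^ k)) f = 0) ∧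
    (∀ g ∈ NN σ m l,
      (((2 : ℝ) ^ k - 4 * ((t * m : ℕ) : ℝ) ^ l) / (3 * (2 : ℝ) ^ k)) ≤
        clsErr (2 ^ k) (apX (2 ^ k)) (apY (2 ^ k)) g) := by
  refine ⟨⟨fm^[k], ⟨fm, fm_mem_NN, rfl⟩, ?_⟩, ?_⟩
  · rw [clsErr_apX_apY, filter_false_of_mem fun i hi =>
      not_not.mpr (cls_fm_iterate k i (mem_range.mp hi)), card_empty, Nat.cast_zero, zero_div]
  rintro g ⟨F, hF, hgF⟩
  obtain rfl : g = fun x => F x 0 := funext hgF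
  obtain ⟨T, hTt, hσT⟩ := hσ.exists_affineOff
  obtain ⟨S, hS, hSF⟩ := hF.exists_affineOff hσT
  have hm : 1 ≤ m := hF.width_le
  set M := #((range (2 ^ k)).filter fun i : ℕ =>
    cls (fun x => F x 0) ((i : ℝ) / (2 ^ k : ℕ)) ≠ i % 2)
  have hM : 2 ^ k ≤ 3 * M + 4 * (t * m) ^ l := by
    have hSt : S.card + 1 ≤ (t * m) ^ l := hS.trans (Nat.pow_le_pow_left (by nlinarith) l)
    have := le_two_mul_card_mistakes (hSF 0) (2 ^ k)
    omega
  have hM' : (2 : ℝ) ^ k - 4 * ((t * m : ℕ) : ℝ) ^ l ≤ 3 * M := by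
    rw [sub_le_iff_le_add]
    exact_mod_cast hM
  rw [clsErr_apX_apY]
  calc _ ≤ 3 * (M : ℝ) / (3 * 2 ^ k) := by gcongr
    _ = M / (2 ^ k : ℕ) := by push_cast; exact mul_div_mul_left _ _ three_ne_zero

/-- on the `2^k`-alternating-point problem, a recurrent ReLU network with
`2` layers of at most `2` nodes iterated `k` times achieves zero classification error,
while every network in `𝔑(σ; m, l)` with `σ` being `t`-sawtooth has classification
error at least `(n - 4(tm)^l)/(3n)` where `n = 2^k`. -/
theorem deep_vs_shallow_refined (k l m t : ℕ) (hk : 0 < k) (hl : 0 < l) (hm : 0 < m)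
    (σ : ℝ → ℝ) (hσ : Sawtooth t σ) :
    (∃ f ∈ RNN relu 2 2 k, clsErr (2 ^ k) (apX (2 ^ k)) (apY (2 ^ k)) f = 0) ∧
    (∀ g ∈ NN σ m l,
      (((2 : ℝ) ^ k - 4 * ((t * m : ℕ) : ℝ) ^ l) / (3 * (2 : ℝ) ^ k)) ≤
        clsErr (2 ^ k) (apX (2 ^ k)) (apY (2 ^ k)) g) :=
  deep_vs_shallow_refined_general k l m t σ hσ
end
end

section
/- Let x ∈ [0,1] and a positive integer k be given, and let i_k ∈ {0, 1, …, 2^(k−1)} be the unique nonnegative integer and x_k ∈ [0,1) the unique real with x = (i_k + x_k)·2^(1−k). Then the k-fold composition of the mirror map satisfies f_m^k(x) = 2x_k when 0 ≤ x_k ≤ 1/2, and f_m^k(x) = 2(1 − x_k) when 1/2 < x_k < 1. -/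
noncomputable section

/-! On `[0, 1]` the mirror map agrees with `tent y = 2 · dist(y, ℤ)`, which maps `ℝ` into
`[0, 1]` and satisfies `tent (tent y) = tent (2 y)`. Hence
`fm^[k] x = tent (2^(k-1) x) = tent (i + xk) = tent xk = fm xk`. -/

open Set

def tent (y : ℝ) : ℝ := 2 * ‖(y : UnitAddCircle)‖

lemma tent_intCast_add (m : ℤ) (y : ℝ) : tent (m + y) = tent y := by
  have hm : ((m : ℝ) : UnitAddCircle) = 0 := (AddCircle.coe_eq_zero_iff 1).2 ⟨m, by simp⟩
  rw [tent, AddCircle.coe_add, hm, zero_add, tent]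

lemma tent_natCast_add (m : ℕ) (y : ℝ) : tent (m + y) = tent y := by
  exact_mod_cast tent_intCast_add m y

lemma tent_neg (y : ℝ) : tent (-y) = tent y := by
  rw [tent, AddCircle.coe_neg, norm_neg, tent]

lemma tent_abs (y : ℝ) : tent |y| = tent y := by
  rcases abs_choice y with h | h <;> rw [h]
  exact tent_neg y

lemma tent_one_sub (y : ℝ) : tent (1 - y) = tent y := by
  rw [sub_eq_add_neg, ← Int.cast_one, tent_intCast_add, tent_neg]

lemma tent_mem_Icc (y : ℝ) : tent y ∈ Icc 0 1 := by
  have h := AddCircle.norm_le_half_period 1 (x := (y : UnitAddCircle)) one_ne_zero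
  rw [abs_one] at h
  exact ⟨by unfold tent; positivity, by unfold tent; linarith⟩

lemma tent_eq_two_mul {y : ℝ} (h₀ : 0 ≤ y) (h₁ : y ≤ 1 / 2) : tent y = 2 * y := by
  rw [tent, (AddCircle.norm_coe_eq_abs_iff 1 one_ne_zero).2 (by rwa [abs_one, abs_of_nonneg h₀]),
    abs_of_nonneg h₀]

lemma tent_tent (y : ℝ) : tent (tent y) = tent (2 * y) := by
  have hy : tent y = |2 * y - 2 * round y| := by
    rw [tent, UnitAddCircle.norm_eq, ← abs_two, ← abs_mul, abs_two, mul_sub]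
  have hint : 2 * y - 2 * round y = ((-(2 * round y) : ℤ) : ℝ) + 2 * y := by push_cast; ring
  rw [hy, tent_abs, hint, tent_intCast_add]

lemma fm_eq_tent {y : ℝ} (hy : y ∈ Icc (0 : ℝ) 1) : fm y = tent y := by
  unfold fm
  split_ifs with hlow hhigh
  · exact (tent_eq_two_mul hlow.1 hlow.2).symm
  · rw [← tent_one_sub, tent_eq_two_mul] <;> linarith [hy.2, hhigh.1]
  · exact absurd ⟨lt_of_not_ge fun h => hlow ⟨hy.1, h⟩, hy.2⟩ hhigh

lemma fm_iterate_eq_tent (n : ℕ) {y : ℝ} (hy : y ∈ Icc (0 : ℝ) 1) :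
    fm^[n] y = tent (2 ^ ((n : ℤ) - 1) * y) := by
  induction n with
  | zero =>
    rw [Function.iterate_zero_apply, Nat.cast_zero, zero_sub, zpow_neg_one, tent_eq_two_mul] <;>
      linarith [hy.1, hy.2]
  | succ n ih =>
    rw [Function.iterate_succ_apply', ih, fm_eq_tent (tent_mem_Icc _), tent_tent, ← mul_assoc,
      ← zpow_one_add₀ two_ne_zero]
    push_cast
    ring_nf

theorem fm_iterate_formula_general (k : ℕ) (x : ℝ) (hx : x ∈ Set.Icc (0 : ℝ) 1)
    (i : ℕ) (xk : ℝ) (hxk : xk ∈ Set.Ico (0 : ℝ) 1)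
    (hdecomp : x = ((i : ℝ) + xk) * (2 : ℝ) ^ (1 - (k : ℤ))) :
    (xk ≤ 1 / 2 → fm^[k] x = 2 * xk) ∧ (1 / 2 < xk → fm^[k] x = 2 * (1 - xk)) := by
  have hscale : (2 : ℝ) ^ ((k : ℤ) - 1) * x = i + xk := by
    rw [hdecomp, mul_comm, mul_assoc, ← zpow_add₀ two_ne_zero]
    simp
  have hfm : fm^[k] x = fm xk := by
    rw [fm_iterate_eq_tent k hx, hscale, tent_natCast_add, fm_eq_tent (Ico_subset_Icc_self hxk)]
  rw [hfm, fm]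
  exact ⟨fun h => if_pos ⟨hxk.1, h⟩,
    fun h => by rw [if_neg fun h' => h'.2.not_gt h, if_pos ⟨h, hxk.2.le⟩]⟩

/-- explicit formula for the `k`-fold composition of the mirror map:
writing `x = (i + xk) * 2^(1-k)` with `i ∈ {0,…,2^(k-1)}` an integer and `xk ∈ [0,1)`,
`fm^[k] x = 2 xk` when `xk ≤ 1/2` and `fm^[k] x = 2 (1 - xk)` when `1/2 < xk`. -/
theorem fm_iterate_formula (k : ℕ) (hk : 0 < k) (x : ℝ) (hx : x ∈ Set.Icc (0 : ℝ) 1)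
    (i : ℕ) (hi : i ≤ 2 ^ (k - 1)) (xk : ℝ) (hxk : xk ∈ Set.Ico (0 : ℝ) 1)
    (hdecomp : x = ((i : ℝ) + xk) * (2 : ℝ) ^ (1 - (k : ℤ))) :
    (xk ≤ 1 / 2 → fm^[k] x = 2 * xk) ∧ (1 / 2 < xk → fm^[k] x = 2 * (1 - xk)) :=
  fm_iterate_formula_general k x hx i xk hxk hdecomp
end
end

section
/- Let k be a positive integer and n := 2^k. For every i ∈ {0, 1, …, n−1}, the k-fold composition of the mirror map satisfies f_m^k(i/n) = i mod 2; in particular f_m^k achieves classification error zero on the n-ap. -/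
noncomputable section

/-!
On `[0, 1]` the mirror map is `x ↦ 2 min(x, 1 - x)`, so it folds the grid `m / 2N` onto the grid
`m / N`, sending `m` to `min(m, 2N - m)`, which has the parity of `m`. Starting from
`N = 2^(k-1)`, after `k` folds the point `i / 2^k` lands on `0` or `1` according to the parity of `i`.
-/

lemma fm_eq_two_mul_min {x : ℝ} (hx₀ : 0 ≤ x) (hx₁ : x ≤ 1) : fm x = 2 * min x (1 - x) := by
  unfold fm
  split_ifs with h₁ h₂
  · rw [min_eq_left (by linarith [h₁.2])]
  · rw [min_eq_right (by linarith [h₂.1])]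
  · exfalso
    by_cases hx : x ≤ 1 / 2
    exacts [h₁ ⟨hx₀, hx⟩, h₂ ⟨not_le.mp hx, hx₁⟩]

lemma fm_natCast_div_two_mul {N m : ℕ} (hN : 0 < N) (hm : m ≤ 2 * N) :
    fm (m / (2 * N)) = ((min m (2 * N - m) : ℕ) : ℝ) / N := by
  have hN' : (0 : ℝ) < N := by exact_mod_cast hN
  have hm' : (m : ℝ) ≤ 2 * N := by exact_mod_cast hm
  rw [fm_eq_two_mul_min (by positivity) ((div_le_one (by positivity)).mpr hm'),
    Nat.cast_min, Nat.cast_sub hm, ← min_div_div_right hN'.le, mul_min_of_nonneg _ _ two_pos.le]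
  push_cast
  congr 1 <;> field_simp

lemma min_sub_mod_two {N m : ℕ} (hm : m ≤ 2 * N) : min m (2 * N - m) % 2 = m % 2 := by
  omega

lemma fm_iterate_natCast_div_two_pow (k : ℕ) {m : ℕ} (hm : m ≤ 2 ^ k) :
    fm^[k] (m / 2 ^ k) = ((m % 2 : ℕ) : ℝ) := by
  induction k generalizing m with
  | zero =>
    obtain rfl | rfl : m = 0 ∨ m = 1 := by omega
    all_goals simp
  | succ k ih =>
    rw [pow_succ'] at hm ⊢
    have hfold := fm_natCast_div_two_mul (N := 2 ^ k) (by positivity) hm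
    push_cast at hfold
    rw [Function.iterate_succ_apply, hfold, ← min_sub_mod_two hm]
    exact_mod_cast ih (by omega)

lemma cls_eq_of_eq_mod_two {f : ℝ → ℝ} {x : ℝ} {m : ℕ} (h : f x = ((m % 2 : ℕ) : ℝ)) :
    cls f x = m % 2 := by
  rcases Nat.mod_two_eq_zero_or_one m with hm | hm <;> norm_num [cls, h, hm]

lemma clsErr_eq_zero_of_forall_cls_eq {n : ℕ} {x : Fin n → ℝ} {y : Fin n → ℕ} {f : ℝ → ℝ}
    (h : ∀ i, cls f (x i) = y i) : clsErr n x y f = 0 := by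
  simp [clsErr, h]

theorem fm_iterate_fits_ap_general (k : ℕ) :
    (∀ i : ℕ, i < 2 ^ k → fm^[k] ((i : ℝ) / (2 ^ k : ℕ)) = ((i % 2 : ℕ) : ℝ)) ∧
    clsErr (2 ^ k) (apX (2 ^ k)) (apY (2 ^ k)) fm^[k] = 0 := by
  have fits : ∀ i : ℕ, i < 2 ^ k → fm^[k] ((i : ℝ) / (2 ^ k : ℕ)) = ((i % 2 : ℕ) : ℝ) :=
    fun i hi => by exact_mod_cast fm_iterate_natCast_div_two_pow k hi.le
  exact ⟨fits, clsErr_eq_zero_of_forall_cls_eq fun i => cls_eq_of_eq_mod_two (fits i i.isLt)⟩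

/-- with `n = 2^k`, the `k`-fold composition of the mirror map fits the
`n`-alternating-point problem exactly: `fm^[k] (i/n) = i mod 2`, so it has zero
classification error on the `n`-ap. -/
theorem fm_iterate_fits_ap (k : ℕ) (hk : 0 < k) :
    (∀ i : ℕ, i < 2 ^ k → fm^[k] ((i : ℝ) / (2 ^ k : ℕ)) = ((i % 2 : ℕ) : ℝ)) ∧
    clsErr (2 ^ k) (apX (2 ^ k)) (apY (2 ^ k)) fm^[k] = 0 :=
  fm_iterate_fits_ap_general k
end
end

section
/- Let x_1 < x_2 < ⋯ < x_n be real points with alternating labels y_i ∈ {0,1} (i.e., y_{i+1} ≠ y_i for all i), and let g : ℝ → {0,1} be piecewise constant with respect to a partition of ℝ into at most s consecutive intervals. Then the number of indices i with g(x_i) ≠ y_i is at least (n − 2s)/3. -/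
noncomputable section

/-! Consecutive pairs of points lying in a common interval of constancy of `g` contain a
misclassified point, because the labels alternate; there are at least `n - s` such pairs, since
the interval index is monotone and so changes at most `s - 1` times. Every misclassified point
lies in at most two pairs, whence `n - s ≤ 2 · #errors`. -/

open Finset

theorem Fin.exists_mem_Ico_castSucc_succ {α : Type*} [LinearOrder α] {s : ℕ}
    (b : Fin (s + 1) → α) {a : α} (h0 : b 0 ≤ a) (hlast : a < b (Fin.last s)) :
    ∃ j : Fin s, a ∈ Set.Ico (b j.castSucc) (b j.succ) := by
  induction s with
  | zero => exact absurd (h0.trans_lt hlast) (lt_irrefl _)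
  | succ s ih =>
    by_cases ha : a < b (Fin.last s).castSucc
    · obtain ⟨j, hj⟩ := ih (b ∘ Fin.castSucc) h0 ha
      exact ⟨j.castSucc, by rw [Fin.succ_castSucc]; exact hj⟩
    · exact ⟨Fin.last s, not_lt.mp ha, by simpa using hlast⟩

theorem PiecewiseConst.exists_monotone_factorization {s : ℕ} {g : ℝ → ℕ}
    (hg : PiecewiseConst s g) :
    ∃ (ι : ℝ → Fin s) (c : Fin s → ℕ), Monotone ι ∧ g = c ∘ ι := by
  obtain ⟨b, hb0, hblast, hb, hbc⟩ := hg
  choose c hc using hbc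
  have hι (z : ℝ) : ∃ j : Fin s, (z : EReal) ∈ Set.Ico (b j.castSucc) (b j.succ) :=
    Fin.exists_mem_Ico_castSucc_succ b (by simp [hb0]) (by simp [hblast])
  choose ι hι using hι
  refine ⟨ι, c, fun z w hzw => ?_, funext fun z => hc _ z (hι z).1 (hι z).2⟩
  by_contra! hlt
  have : (w : EReal) < z := calc
    (w : EReal) < b (ι w).succ := (hι w).2
    _ ≤ b (ι z).castSucc := hb (Fin.succ_le_castSucc_iff.mpr hlt)
    _ ≤ z := (hι z).1
  exact (EReal.coe_lt_coe_iff.mp this).not_ge hzw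

theorem card_filter_castSucc_ne_succ_add_le {m : ℕ} {τ : Fin (m + 1) → ℕ}
    (hτ : Monotone τ) :
    #{i : Fin m | τ i.castSucc ≠ τ i.succ} + τ 0 ≤ τ (Fin.last m) := by
  induction m with
  | zero => simp
  | succ m ih =>
    have h01 : τ 0 ≤ τ 1 := hτ (Fin.zero_le 1)
    have htail := ih (hτ.comp Fin.strictMono_succ.monotone)
    simp only [Function.comp_apply, Fin.succ_castSucc, Fin.succ_last, Fin.succ_zero_eq_one,
      Nat.succ_eq_add_one] at htail
    rw [Fin.card_filter_univ_succ]
    split_ifs with h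
    · have : τ 0 < τ 1 := h01.lt_of_ne (by simpa using h)
      omega
    · omega

theorem card_filter_comp_le_of_injective {α β : Type*} [Fintype α] [Fintype β]
    {f : α → β} (hf : Function.Injective f) (P : β → Prop) [DecidablePred P] :
    #{a | P (f a)} ≤ #{b | P b} :=
  card_le_card_of_injOn f (fun a ha => by simpa using ha) hf.injOn

theorem succ_le_two_mul_card_ne_add {α : Type*} [DecidableEq α] {m s : ℕ}
    {τ : Fin (m + 1) → Fin s} (hτ : Monotone τ) (c : Fin s → α) {y : Fin (m + 1) → α}
    (hy : ∀ i : Fin m, y i.succ ≠ y i.castSucc) :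
    m + 1 ≤ 2 * #{i | c (τ i) ≠ y i} + s := by
  have hsame : #{i : Fin m | τ i.castSucc = τ i.succ} ≤ 2 * #{i | c (τ i) ≠ y i} := calc
    #{i : Fin m | τ i.castSucc = τ i.succ}
      ≤ #(({i : Fin m | c (τ i.castSucc) ≠ y i.castSucc} : Finset (Fin m)) ∪
          ({i : Fin m | c (τ i.succ) ≠ y i.succ} : Finset (Fin m))) := by
        refine card_le_card fun i hi => ?_
        simp only [mem_filter, mem_univ, true_and, mem_union] at hi ⊢
        by_contra! hok
        exact hy i (by rw [← hok.1, ← hok.2, hi])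
    _ ≤ #{i : Fin m | c (τ i.castSucc) ≠ y i.castSucc} +
          #{i : Fin m | c (τ i.succ) ≠ y i.succ} := card_union_le _ _
    _ ≤ 2 * #{i | c (τ i) ≠ y i} := by
        have h₁ := card_filter_comp_le_of_injective (Fin.castSucc_injective m)
          fun i => c (τ i) ≠ y i
        have h₂ := card_filter_comp_le_of_injective (Fin.succ_injective m)
          fun i => c (τ i) ≠ y i
        omega
  have hchange : #{i : Fin m | τ i.castSucc ≠ τ i.succ} + 1 ≤ s := by
    have hmono : Monotone fun i => (τ i : ℕ) := hτ
    have := card_filter_castSucc_ne_succ_add_le hmono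
    simp only [ne_eq, Fin.val_inj] at this ⊢
    have := (τ (Fin.last m)).isLt
    omega
  have hsplit := card_filter_add_card_filter_not (s := (univ : Finset (Fin m)))
    (fun i => τ i.castSucc = τ i.succ)
  simp only [card_univ, Fintype.card_fin, ← ne_eq] at hsplit
  omega

theorem alternating_points_lb_general (n s : ℕ) (x : Fin n → ℝ) (hx : StrictMono x)
    (y : Fin n → ℕ)
    (halt : ∀ (i : Fin n) (h : (i : ℕ) + 1 < n), y ⟨(i : ℕ) + 1, h⟩ ≠ y i)
    (g : ℝ → ℕ) (hg : PiecewiseConst s g) :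
    ((n : ℝ) - 2 * s) / 3 ≤ ((Finset.univ.filter fun i => g (x i) ≠ y i).card : ℝ) := by
  obtain ⟨ι, c, hι, rfl⟩ := hg.exists_monotone_factorization
  have hcount : n ≤ 2 * #{i | (c ∘ ι) (x i) ≠ y i} + s := by
    cases n with
    | zero => omega
    | succ m =>
      exact succ_le_two_mul_card_ne_add (hι.comp hx.monotone) c
        fun i => halt i.castSucc (by simp)
  have hcount' : (n : ℝ) ≤ 2 * #{i | (c ∘ ι) (x i) ≠ y i} + s := mod_cast hcount
  rw [div_le_iff₀ three_pos]
  linarith [Nat.cast_nonneg (α := ℝ) s]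

/-- if `x₁ < ⋯ < xₙ` have alternating binary labels and `g : ℝ → {0,1}`
is piecewise constant w.r.t. at most `s` consecutive intervals, then `g` misclassifies
at least `(n - 2s)/3` of the points. -/
theorem alternating_points_lb (n s : ℕ) (x : Fin n → ℝ) (hx : StrictMono x)
    (y : Fin n → ℕ) (hy01 : ∀ i, y i = 0 ∨ y i = 1)
    (halt : ∀ (i : Fin n) (h : (i : ℕ) + 1 < n), y ⟨(i : ℕ) + 1, h⟩ ≠ y i)
    (g : ℝ → ℕ) (hg01 : ∀ z, g z = 0 ∨ g z = 1) (hg : PiecewiseConst s g) :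
    ((n : ℝ) - 2 * s) / 3 ≤ ((Finset.univ.filter fun i => g (x i) ≠ y i).card : ℝ) :=
  alternating_points_lb_general n s x hx y halt g hg
end
end
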